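/- arXiv:2106.15977 — 4 statements merged into one kernel-verified Lean document; each statement's English description precedes it below -/
import Mathlib

section
/- Let a, b ∈ Z_n. Then there exists a unit u in Z_n with a = ub if and only if gcd(a, n) = gcd(b, n). -/
lemma aux_unit_gcd (n : ℕ) [NeZero n] (a : ZMod n) :
    ∃ u : (ZMod n)ˣ, a = u * (Nat.gcd a.val n : ZMod n) := by
  have hn0 : n ≠ 0 := NeZero.ne n
  have hd0 : 0 < Nat.gcd a.val n := Nat.gcd_pos_of_pos_right _ (Nat.pos_of_ne_zero hn0)
  obtain ⟨m, hm⟩ : Nat.gcd a.val n ∣ n := Nat.gcd_dvd_right _ _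
  obtain ⟨k, hk⟩ : Nat.gcd a.val n ∣ a.val := Nat.gcd_dvd_left _ _
  have hm0 : m ≠ 0 := by rintro rfl; rw [Nat.mul_zero] at hm; omega
  haveI : NeZero m := ⟨hm0⟩
  have hcop : Nat.Coprime k m := by
    have h1 : Nat.gcd a.val n * Nat.gcd k m = Nat.gcd a.val n * 1 := by
      rw [← Nat.gcd_mul_left, ← hk, ← hm, Nat.mul_one]
    exact Nat.eq_of_mul_eq_mul_left hd0 h1
  have hmn : m ∣ n := Dvd.intro_left _ hm.symm
  obtain ⟨u, hu⟩ := ZMod.unitsMap_surjective hmn (ZMod.unitOfCoprime k hcop)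
  have hu' : (((u : ZMod n).val : ℕ) : ZMod m) = (k : ZMod m) := by
    have := congrArg (Units.val) hu
    simp only [ZMod.unitsMap_def, Units.coe_map, MonoidHom.coe_coe,
      ZMod.castHom_apply, ZMod.coe_unitOfCoprime] at this
    rw [← this, ← ZMod.natCast_val]
  have hmod : (u : ZMod n).val ≡ k [MOD m] := (ZMod.natCast_eq_natCast_iff _ _ _).mp hu'
  have hmod2 : Nat.gcd a.val n * (u : ZMod n).val ≡ a.val [MOD n] := by
    have h := hmod.mul_left' (Nat.gcd a.val n)
    rwa [← hk, ← hm] at h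
  refine ⟨u, ?_⟩
  have h3 : ((Nat.gcd a.val n * (u : ZMod n).val : ℕ) : ZMod n) = a := by
    rw [(ZMod.natCast_eq_natCast_iff _ _ _).mpr hmod2]
    simp [ZMod.natCast_val, ZMod.cast_id]
  conv_lhs => rw [← h3]
  push_cast
  rw [ZMod.natCast_val, ZMod.cast_id, mul_comm]

lemma aux_gcd_of_unit_mul (n : ℕ) [NeZero n] (a : ZMod n) (u : (ZMod n)ˣ) (c : ℕ)
    (hcn : c ∣ n) (h : a = u * (c : ZMod n)) : Nat.gcd a.val n = c := by
  apply Nat.dvd_antisymm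
  · have h2 : (c : ZMod n) = (u⁻¹ : (ZMod n)ˣ) * a := by
      rw [h, ← mul_assoc, Units.inv_mul, one_mul]
    have hval : (c : ZMod n).val = ((u⁻¹ : (ZMod n)ˣ) : ZMod n).val * a.val % n := by
      rw [h2, ZMod.val_mul]
    have hg : Nat.gcd a.val n ∣ (c : ZMod n).val := by
      rw [hval]
      exact (Nat.dvd_mod_iff (Nat.gcd_dvd_right _ _)).mpr
        (Dvd.dvd.mul_left (Nat.gcd_dvd_left _ _) _)
    rw [ZMod.val_natCast] at hg
    exact (Nat.dvd_mod_iff (Nat.gcd_dvd_right _ _)).mp hg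
  · have hval : a.val = ((u : ZMod n) : ZMod n).val * (c : ZMod n).val % n := by
      rw [h, ZMod.val_mul]
    refine Nat.dvd_gcd ?_ hcn
    rw [hval, ZMod.val_natCast]
    exact (Nat.dvd_mod_iff hcn).mpr (Dvd.dvd.mul_left ((Nat.dvd_mod_iff hcn).mpr dvd_rfl) _)

theorem stmt3 (n : ℕ) (hn : 2 ≤ n) (a b : ZMod n) :
    (∃ u : (ZMod n)ˣ, a = u * b) ↔ Nat.gcd a.val n = Nat.gcd b.val n := by
  haveI : NeZero n := ⟨by omega⟩
  constructor
  · rintro ⟨u, rfl⟩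
    obtain ⟨v, hv⟩ := aux_unit_gcd n b
    have : (u * b : ZMod n) = (u * v) * (Nat.gcd b.val n : ZMod n) := by
      rw [mul_assoc, ← hv]
    exact aux_gcd_of_unit_mul n _ (u * v) _ (Nat.gcd_dvd_right _ _) this
  · intro hg
    obtain ⟨u, hu⟩ := aux_unit_gcd n a
    obtain ⟨v, hv⟩ := aux_unit_gcd n b
    refine ⟨u * v⁻¹, ?_⟩
    rw [hu, hg]
    have h2 : ((Nat.gcd b.val n : ZMod n)) = (v⁻¹ : (ZMod n)ˣ) * b := by
      conv_rhs => rw [hv]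
      rw [← mul_assoc, Units.inv_mul, one_mul]
    rw [h2, Units.val_mul, mul_assoc]
end

section
/- Let R be a ring with unity and x ∈ Z(R)* with x^2 = 0. Then for any a, b in the equivalence class [x] of the relation ∼ (a ∼ b iff a = ub = bv for units u,v), one has ab = 0 and ba = 0; conversely if x^2 ≠ 0 then no two elements of [x] are adjacent in Γ(R). Hence the induced subgraph of Γ(R) on [x] is complete if x^2 = 0 and is edgeless if x^2 ≠ 0. -/
theorem stmt5 {R : Type*} [Ring R] (x : R) (hx : x ≠ 0)
    (hzd : ∃ y : R, y ≠ 0 ∧ (x * y = 0 ∨ y * x = 0))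
    (cls : Set R) (hcls : cls = {a : R | ∃ u v : Rˣ, a = u * x ∧ a = x * v}) :
    (x ^ 2 = 0 → ∀ a ∈ cls, ∀ b ∈ cls, a * b = 0 ∧ b * a = 0) ∧
    (x ^ 2 ≠ 0 → ∀ a ∈ cls, ∀ b ∈ cls, a ≠ b → ¬(a * b = 0 ∨ b * a = 0)) := by
  subst hcls
  have key : ∀ a ∈ {a : R | ∃ u v : Rˣ, a = u * x ∧ a = x * v},
      ∀ b ∈ {a : R | ∃ u v : Rˣ, a = u * x ∧ a = x * v},
      ∃ w w' : Rˣ, a * b = w * x ^ 2 * w' := by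
    rintro a ⟨u, v, hau, hav⟩ b ⟨u', v', hbu, hbv⟩
    exact ⟨u, v', by rw [hau, hbv, sq]; simp [mul_assoc]⟩
  constructor
  · intro h2 a ha b hb
    obtain ⟨w, w', h⟩ := key a ha b hb
    obtain ⟨w2, w2', h'⟩ := key b hb a ha
    rw [h, h', h2]
    simp
  · intro h2 a ha b hb _
    rintro (h | h)
    · obtain ⟨w, w', hw⟩ := key a ha b hb
      rw [hw] at h
      apply h2
      have := congrArg (fun z => (↑w⁻¹ : R) * z * ↑w'⁻¹) h
      simpa [mul_assoc, ← mul_assoc] using this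
    · obtain ⟨w, w', hw⟩ := key b hb a ha
      rw [hw] at h
      apply h2
      have := congrArg (fun z => (↑w⁻¹ : R) * z * ↑w'⁻¹) h
      simpa [mul_assoc, ← mul_assoc] using this
end

section
/- Let R be a ring with unity and x ∈ Z(R)*. If e and f are idempotents both lying in the ∼-equivalence class [x] (i.e., e = u1 x = x v1 and f = u2 x = x v2 for units u_i, v_i), then e = f. -/
theorem stmt6 {R : Type*} [Ring R] (x e f : R) (hx : x ≠ 0)
    (hzd : ∃ y : R, y ≠ 0 ∧ (x * y = 0 ∨ y * x = 0))
    (he : e * e = e) (hf : f * f = f)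
    (hec : ∃ u v : Rˣ, e = u * x ∧ e = x * v)
    (hfc : ∃ u v : Rˣ, f = u * x ∧ f = x * v) :
    e = f := by
  obtain ⟨u1, v1, he1, he2⟩ := hec
  obtain ⟨u2, v2, hf1, hf2⟩ := hfc
  -- x * u2 * x = x
  have hu2 : x * (u2 : R) * x = x := by
    have h : (u2 : R) * (x * (u2 : R) * x) = (u2 : R) * x := by
      calc (u2 : R) * (x * (u2 : R) * x) = ((u2 : R) * x) * ((u2 : R) * x) := by noncomm_ring
        _ = f * f := by rw [← hf1]
        _ = f := hf
        _ = (u2 : R) * x := hf1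
    calc x * (u2 : R) * x = (u2⁻¹ : Rˣ) * ((u2 : R) * (x * (u2 : R) * x)) := by
          rw [← mul_assoc, Units.inv_mul, one_mul]
      _ = (u2⁻¹ : Rˣ) * ((u2 : R) * x) := by rw [h]
      _ = x := by rw [← mul_assoc, Units.inv_mul, one_mul]
  -- x * v1 * x = x
  have hv1 : x * (v1 : R) * x = x := by
    have h : (x * (v1 : R) * x) * (v1 : R) = x * (v1 : R) := by
      calc (x * (v1 : R) * x) * (v1 : R) = (x * (v1 : R)) * (x * (v1 : R)) := by noncomm_ring
        _ = e * e := by rw [← he2]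
        _ = e := he
        _ = x * (v1 : R) := he2
    calc x * (v1 : R) * x
        = ((x * (v1 : R) * x) * (v1 : R)) * (v1⁻¹ : Rˣ) := by
          rw [mul_assoc _ _ ((v1⁻¹ : Rˣ) : R), Units.mul_inv, mul_one]
      _ = (x * (v1 : R)) * (v1⁻¹ : Rˣ) := by rw [h]
      _ = x := by rw [mul_assoc _ _ ((v1⁻¹ : Rˣ) : R), Units.mul_inv, mul_one]
  have h1 : e * f = e := by
    rw [he1, hf1]
    calc (u1 : R) * x * ((u2 : R) * x) = (u1 : R) * (x * (u2 : R) * x) := by noncomm_ring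
      _ = (u1 : R) * x := by rw [hu2]
  have h2 : e * f = f := by
    rw [he2, hf2]
    calc x * (v1 : R) * (x * (v2 : R)) = (x * (v1 : R) * x) * (v2 : R) := by noncomm_ring
      _ = x * (v2 : R) := by rw [hv1]
  rw [← h1, h2]
end

section
/- Let q be a prime power and A ∈ M_n(F_q) a matrix of rank r. Then the number of matrices B ∈ M_n(F_q) such that B = PA = AQ for some invertible P, Q equals ∏_{i=0}^{r-1} (q^r − q^i). -/
open Matrix LinearMap

lemma matrix_isUnit_of_mul_eq_one {α : Type*} [CommRing α] {m : Type*} [Fintype m]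
    [DecidableEq m] (A B : Matrix m m α) (h : A * B = 1) : IsUnit A :=
  ⟨⟨A, B, h, mul_eq_one_comm.mp h⟩, rfl⟩

section aux
variable {α : Type*} [CommRing α] {m r k : Type*} [Fintype m] [Fintype r] [Fintype k]
  [DecidableEq m] [DecidableEq r]

lemma aux1 (U : Matrix m r α) (V : Matrix r m α) (h : V * U = 1) (X Y : Matrix r r α)
    (hXY : X + Y + X * Y = 0) :
    (1 + U * X * V) * (1 + U * Y * V) = 1 := by
  have hmid : U * X * V * (U * Y * V) = U * (X * Y) * V := by
    simp only [Matrix.mul_assoc]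
    rw [← Matrix.mul_assoc V U, h, Matrix.one_mul]
  have expand : U * (X + Y + X * Y) * V = U * X * V + U * Y * V + U * (X * Y) * V := by
    rw [Matrix.mul_add, Matrix.mul_add, Matrix.add_mul, Matrix.add_mul]
  calc (1 + U * X * V) * (1 + U * Y * V)
      = 1 + (U * X * V + U * Y * V + U * (X * Y) * V) := by
        rw [Matrix.add_mul, Matrix.mul_add, Matrix.mul_add, Matrix.one_mul, Matrix.mul_one, hmid]
        simp only [Matrix.one_mul]
        abel
    _ = 1 + U * (X + Y + X * Y) * V := by rw [expand]
    _ = 1 := by rw [hXY, Matrix.mul_zero, Matrix.zero_mul, add_zero]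

lemma aux2 (U : Matrix m r α) (V : Matrix r m α) (h : V * U = 1) (X : Matrix r r α)
    (W : Matrix r k α) :
    (1 + U * X * V) * (U * W) = U * ((1 + X) * W) := by
  have hmid : U * X * V * (U * W) = U * (X * W) := by
    simp only [Matrix.mul_assoc]
    rw [← Matrix.mul_assoc V U, h, Matrix.one_mul]
  rw [Matrix.add_mul, Matrix.one_mul, hmid, Matrix.add_mul, Matrix.one_mul, Matrix.mul_add]

lemma aux3 (U : Matrix m r α) (V : Matrix r m α) (h : V * U = 1) (X : Matrix r r α)
    (W : Matrix k r α) :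
    (W * V) * (1 + U * X * V) = (W * (1 + X)) * V := by
  have hmid : W * V * (U * X * V) = W * (X * V) := by
    simp only [Matrix.mul_assoc]
    rw [← Matrix.mul_assoc V U, h, Matrix.one_mul]
  rw [Matrix.mul_add, Matrix.mul_one, hmid, Matrix.mul_add, Matrix.mul_one, Matrix.add_mul,
    Matrix.mul_assoc]

end aux

/-- rank factorization with one-sided inverses -/
lemma rank_fact {F : Type*} [Field F] {n : ℕ} (A : Matrix (Fin n) (Fin n) F) (r : ℕ)
    (hr : A.rank = r) :
    ∃ (C : Matrix (Fin n) (Fin r) F) (R : Matrix (Fin r) (Fin n) F)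
      (C' : Matrix (Fin r) (Fin n) F) (R' : Matrix (Fin n) (Fin r) F),
      A = C * R ∧ C' * C = 1 ∧ R * R' = 1 := by
  set f := A.mulVecLin with hf
  have hW : Module.finrank F (LinearMap.range f) = r := hr
  let b : Module.Basis (Fin r) F (LinearMap.range f) := Module.finBasisOfFinrankEq F _ hW
  let c : (Fin r → F) →ₗ[F] (Fin n → F) :=
    (LinearMap.range f).subtype ∘ₗ (b.equivFun.symm : (Fin r → F) →ₗ[F] _)
  let ρ : (Fin n → F) →ₗ[F] (Fin r → F) :=
    (b.equivFun : _ →ₗ[F] (Fin r → F)) ∘ₗ f.rangeRestrict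
  have hcρ : c ∘ₗ ρ = f := by
    apply LinearMap.ext
    intro x
    show (LinearMap.range f).subtype (b.equivFun.symm (b.equivFun (f.rangeRestrict x))) = f x
    rw [LinearEquiv.symm_apply_apply]
    rfl
  have hcinj : LinearMap.ker c = ⊥ := by
    rw [LinearMap.ker_eq_bot]
    exact (LinearMap.range f).injective_subtype.comp b.equivFun.symm.injective
  obtain ⟨c', hc'⟩ := c.exists_leftInverse_of_injective hcinj
  have hρsurj : LinearMap.range ρ = ⊤ := by
    rw [LinearMap.range_eq_top]
    exact b.equivFun.surjective.comp f.surjective_rangeRestrict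
  obtain ⟨ρ', hρ'⟩ := ρ.exists_rightInverse_of_surjective hρsurj
  refine ⟨LinearMap.toMatrix' c, LinearMap.toMatrix' ρ, LinearMap.toMatrix' c',
    LinearMap.toMatrix' ρ', ?_, ?_, ?_⟩
  · rw [← LinearMap.toMatrix'_comp, hcρ, hf, ← Matrix.toLin'_apply', LinearMap.toMatrix'_toLin']
  · rw [← LinearMap.toMatrix'_comp, hc', LinearMap.toMatrix'_id]
  · rw [← LinearMap.toMatrix'_comp, hρ', LinearMap.toMatrix'_id]

lemma isUnit_of_rank_eq {F : Type*} [Field F] {r : ℕ} (M : Matrix (Fin r) (Fin r) F)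
    (h : M.rank = r) : IsUnit M := by
  have htop : LinearMap.range M.mulVecLin = ⊤ := by
    apply Submodule.eq_top_of_finrank_eq
    rw [show Module.finrank F (LinearMap.range M.mulVecLin) = M.rank from rfl, h,
      Module.finrank_fintype_fun_eq_card, Fintype.card_fin]
  have hsurj : Function.Surjective M.mulVecLin := LinearMap.range_eq_top.mp htop
  have hbij : Function.Bijective M.mulVecLin :=
    ⟨(LinearMap.injective_iff_surjective).mpr hsurj, hsurj⟩
  have h1 : IsUnit (Matrix.toLinAlgEquiv' M) := by
    rw [Module.End.isUnit_iff]
    exact hbij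
  have h2 := h1.map (Matrix.toLinAlgEquiv' (R := F) (n := Fin r)).symm
  rwa [AlgEquiv.symm_apply_apply] at h2




theorem stmt10 {F : Type*} [Field F] [Fintype F] {n : ℕ}
    (A : Matrix (Fin n) (Fin n) F) (r : ℕ) (hr : A.rank = r) :
    Nat.card {B : Matrix (Fin n) (Fin n) F |
        ∃ P Q : Matrix (Fin n) (Fin n) F,
          IsUnit P ∧ IsUnit Q ∧ B = P * A ∧ B = A * Q} =
      ∏ i ∈ Finset.range r, (Fintype.card F ^ r - Fintype.card F ^ i) := by
  classical
  obtain ⟨C, R, C', R', hA, hC, hR⟩ := rank_fact A r hr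
  set S := {B : Matrix (Fin n) (Fin n) F |
        ∃ P Q : Matrix (Fin n) (Fin n) F,
          IsUnit P ∧ IsUnit Q ∧ B = P * A ∧ B = A * Q} with hS
  have fwd : ∀ M : Matrix (Fin r) (Fin r) F, IsUnit M → (C * M * R) ∈ S := by
    rintro M ⟨u, rfl⟩
    set M' : Matrix (Fin r) (Fin r) F := ↑u⁻¹ with hM'
    have huM : (u : Matrix (Fin r) (Fin r) F) * M' = 1 := by
      rw [hM', ← Units.val_mul, mul_inv_cancel, Units.val_one]
    set M : Matrix (Fin r) (Fin r) F := ↑u with hM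
    have hz : (M - 1) + (M' - 1) + (M - 1) * (M' - 1) = 0 := by
      have h1 : (M - 1) + (M' - 1) + (M - 1) * (M' - 1) = M * M' - 1 := by noncomm_ring
      rw [h1, huM, sub_self]
    have honeadd : (1 : Matrix (Fin r) (Fin r) F) + (M - 1) = M := by abel
    refine ⟨1 + C * (M - 1) * C', 1 + R' * (M - 1) * R, ?_, ?_, ?_, ?_⟩
    · exact matrix_isUnit_of_mul_eq_one _ (1 + C * (M' - 1) * C') (aux1 C C' hC _ _ hz)
    · exact matrix_isUnit_of_mul_eq_one _ (1 + R' * (M' - 1) * R) (aux1 R' R hR _ _ hz)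
    · rw [hA, aux2 C C' hC (M - 1) R, honeadd, Matrix.mul_assoc]
    · rw [hA, aux3 R' R hR (M - 1) C, honeadd]
  have bwd : ∀ B ∈ S, C * (C' * B * R') * R = B ∧ IsUnit (C' * B * R') := by
    rintro B ⟨P, Q, hP, hQ, hBP, hBQ⟩
    have h1 : C * (C' * B) = B := by
      rw [hBQ, hA]
      simp only [Matrix.mul_assoc]
      rw [← Matrix.mul_assoc C' C, hC, Matrix.one_mul]
    have h2 : B * R' * R = B := by
      rw [hBP, hA]
      simp only [Matrix.mul_assoc]
      rw [← Matrix.mul_assoc R R', hR, Matrix.one_mul]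
    have hCMR : C * (C' * B * R') * R = B := by
      have hre : C * (C' * B * R') * R = (C * (C' * B)) * R' * R := by
        simp only [Matrix.mul_assoc]
      rw [hre, h1, h2]
    refine ⟨hCMR, ?_⟩
    apply isUnit_of_rank_eq
    apply le_antisymm (Matrix.rank_le_width _)
    have hrB : B.rank = r := by
      rw [hBP, Matrix.rank_mul_eq_right_of_isUnit_det _ _
        ((Matrix.isUnit_iff_isUnit_det P).mp hP), hr]
    calc r = B.rank := hrB.symm
      _ = (C * (C' * B * R') * R).rank := by rw [hCMR]
      _ ≤ (C * (C' * B * R')).rank := Matrix.rank_mul_le_left _ _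
      _ ≤ (C' * B * R').rank := Matrix.rank_mul_le_right _ _
  have e : {M : Matrix (Fin r) (Fin r) F // IsUnit M} ≃ S :=
    { toFun := fun M => ⟨C * M.1 * R, fwd M.1 M.2⟩
      invFun := fun B => ⟨C' * B.1 * R', (bwd B.1 B.2).2⟩
      left_inv := by
        rintro ⟨M, hM⟩
        ext : 1
        show C' * (C * M * R) * R' = M
        simp only [Matrix.mul_assoc]
        rw [hR, Matrix.mul_one, ← Matrix.mul_assoc C' C, hC, Matrix.one_mul]
      right_inv := by
        rintro ⟨B, hB⟩
        ext : 1
        exact (bwd B hB).1 }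
  have e2 : GL (Fin r) F ≃ {M : Matrix (Fin r) (Fin r) F // IsUnit M} :=
    { toFun := fun u => ⟨u.1, u.isUnit⟩
      invFun := fun M => M.2.unit
      left_inv := fun u => Units.ext rfl
      right_inv := fun M => Subtype.ext M.2.unit_spec }
  rw [← Nat.card_congr (e2.trans e), Matrix.card_GL_field]
  exact Fin.prod_univ_eq_prod_range (fun i => Fintype.card F ^ r - Fintype.card F ^ i) r
end
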